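/- Lemma 6.1(c) (removing a black bead from a necklace). Let l be a necklace, let v be a black position of l, and let l' = l.eraseIdx v. Then card (P_k(l')) ≤ card (P_k(l)) for every k ≥ 1, and consequently μ_J(l') ≤ μ_J(l) for every J ≥ 1. -/

import Mathlib

namespace Necklace

/-- The cyclic relative position of `p` with respect to `i` on a necklace of length `n`. -/
def cyclicRel (n : ℕ) (i p : Fin n) : ℕ := ((p : ℕ) + n - (i : ℕ)) % n

/-- `InArc i j p` means that the position `p` lies on the clockwise arc from `i` to `j`
(excluding the endpoints `i` and `j`). -/
def InArc {n : ℕ} (i j p : Fin n) : Prop :=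
  0 < cyclicRel n i p ∧ cyclicRel n i p < cyclicRel n i j

instance {n : ℕ} (i j p : Fin n) : Decidable (InArc i j p) :=
  inferInstanceAs (Decidable (0 < cyclicRel n i p ∧ cyclicRel n i p < cyclicRel n i j))

/-- An entry `false` of a necklace is a white bead, an entry `true` is a black bead. -/
def IsWhite (l : List Bool) (p : Fin l.length) : Prop := l.get p = false

def IsBlack (l : List Bool) (p : Fin l.length) : Prop := l.get p = true

instance (l : List Bool) (p : Fin l.length) : Decidable (IsWhite l p) :=
  inferInstanceAs (Decidable (l.get p = false))

instance (l : List Bool) (p : Fin l.length) : Decidable (IsBlack l p) :=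
  inferInstanceAs (Decidable (l.get p = true))

/-- The number of black beads on the clockwise arc from `i` to `j`. -/
def blackArc (l : List Bool) (i j : Fin l.length) : ℕ :=
  (Finset.univ.filter fun p : Fin l.length => InArc i j p ∧ IsBlack l p).card

/-- The number of white beads on the clockwise arc from `i` to `j`. -/
def whiteArc (l : List Bool) (i j : Fin l.length) : ℕ :=
  (Finset.univ.filter fun p : Fin l.length => InArc i j p ∧ IsWhite l p).card

/-- `P l k` is the set of ordered pairs `(i, j)` of distinct white beads of the necklace
`l` whose clockwise arc from `i` to `j` contains at least `k` black beads. -/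
def P (l : List Bool) (k : ℕ) : Finset (Fin l.length × Fin l.length) :=
  Finset.univ.filter fun q : Fin l.length × Fin l.length =>
    q.1 ≠ q.2 ∧ IsWhite l q.1 ∧ IsWhite l q.2 ∧ k ≤ blackArc l q.1 q.2

/-- The `J`-mixture `μ_J(l)` of the necklace `l`. -/
def mixture (J : ℕ) (l : List Bool) : ℕ := ∑ k ∈ Finset.Icc 1 J, (P l k).card

/-- The number of white beads of `l`. -/
def whiteCount (l : List Bool) : ℕ := l.count false

/-!
`l.eraseIdx v` is a sublist of `l`, so its positions embed order-preservingly into those of `l`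
with the same colours. Such an embedding preserves cyclic betweenness, hence maps the arc
from `i` to `j` into the arc between the images; white pairs whose arc carries at least `k`
black beads are therefore sent injectively to pairs of the same kind in `l`.
-/

lemma cyclicRel_eq {n : ℕ} (i p : Fin n) :
    cyclicRel n i p = if i ≤ p then (p : ℕ) - i else (p : ℕ) + n - i := by
  unfold cyclicRel
  split_ifs with hip
  · rw [Fin.le_def] at hip
    rw [show (p : ℕ) + n - i = (p - i) + n by omega, Nat.add_mod_right,
      Nat.mod_eq_of_lt (by omega)]
  · rw [Nat.mod_eq_of_lt (by omega)]

lemma inArc_iff {n : ℕ} (i j p : Fin n) :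
    InArc i j p ↔ (i < p ∧ p < j) ∨ (p < j ∧ j < i) ∨ (j < i ∧ i < p) := by
  simp only [InArc, cyclicRel_eq, Fin.le_def, Fin.lt_def]
  split_ifs <;> omega

lemma inArc_map_iff {m n : ℕ} (f : Fin m ↪o Fin n) (i j p : Fin m) :
    InArc (f i) (f j) (f p) ↔ InArc i j p := by
  simp only [inArc_iff, f.lt_iff_lt]

section Embedding

variable {l' l : List Bool} (f : Fin l'.length ↪o Fin l.length)
  (hf : ∀ p, l'.get p = l.get (f p))
include hf

lemma blackArc_le_blackArc_map (i j : Fin l'.length) :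
    blackArc l' i j ≤ blackArc l (f i) (f j) := by
  refine Finset.card_le_card_of_injOn f (fun p hp => ?_) f.injective.injOn
  simp only [Finset.mem_coe, Finset.mem_filter, Finset.mem_univ, true_and] at hp ⊢
  exact ⟨(inArc_map_iff f i j p).2 hp.1, (hf p).symm.trans hp.2⟩

lemma card_P_le_of_orderEmbedding (k : ℕ) : (P l' k).card ≤ (P l k).card := by
  refine Finset.card_le_card_of_injOn (Prod.map f f) (fun q hq => ?_)
    (f.injective.prodMap f.injective).injOn
  simp only [P, Finset.mem_coe, Finset.mem_filter, Finset.mem_univ, true_and,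
    Prod.map_fst, Prod.map_snd] at hq ⊢
  obtain ⟨hne, hw₁, hw₂, hk⟩ := hq
  exact ⟨f.injective.ne hne, (hf q.1).symm.trans hw₁, (hf q.2).symm.trans hw₂,
    hk.trans (blackArc_le_blackArc_map f hf q.1 q.2)⟩

end Embedding

lemma card_P_le_of_sublist {l' l : List Bool} (h : l'.Sublist l) (k : ℕ) :
    (P l' k).card ≤ (P l k).card := by
  obtain ⟨f, hf⟩ := List.sublist_iff_exists_fin_orderEmbedding_get_eq.1 h
  exact card_P_le_of_orderEmbedding f hf k

lemma mixture_le_of_sublist {l' l : List Bool} (h : l'.Sublist l) (J : ℕ) :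
    mixture J l' ≤ mixture J l :=
  Finset.sum_le_sum fun k _ => card_P_le_of_sublist h k

theorem mixture_erase_black_general (l : List Bool) (v : Fin l.length) :
    (∀ k : ℕ, 1 ≤ k → (P (l.eraseIdx (v : ℕ)) k).card ≤ (P l k).card) ∧
    (∀ J : ℕ, 1 ≤ J → mixture J (l.eraseIdx (v : ℕ)) ≤ mixture J l) :=
  ⟨fun k _ => card_P_le_of_sublist (List.eraseIdx_sublist l v) k,
    fun J _ => mixture_le_of_sublist (List.eraseIdx_sublist l v) J⟩

/-- Lemma 6.1(c): removing a black bead `v` from a necklace `l` does not increase any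
`card (P_k)`, and hence does not increase any `μ_J`. -/
theorem mixture_erase_black (l : List Bool) (hl : l ≠ []) (v : Fin l.length)
    (hv : IsBlack l v) :
    (∀ k : ℕ, 1 ≤ k → (P (l.eraseIdx (v : ℕ)) k).card ≤ (P l k).card) ∧
    (∀ J : ℕ, 1 ≤ J → mixture J (l.eraseIdx (v : ℕ)) ≤ mixture J l) :=
  mixture_erase_black_general l v

end Necklace
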